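/- Let p ∈ (1,∞), α > 0, φ(t) = t^{p−2} and V(t) = |t² − α²|^p / p. Then the function q(t) = α·tanh(αt/(p−1)^{1/p}) is a heteroclinic solution of problem (P), and every heteroclinic solution of (P) equals q. -/

import Mathlib

/-!
Along any solution the energy `(p - 1) / p * |u'| ^ p - V u` is conserved; since `u → α` it must
vanish, so `|u'| = |u ^ 2 - α ^ 2| / c` with `c = (p - 1) ^ (1 / p)`. By Grönwall, `u` can then
never reach `±α`, so `|u| < α`, `u'` never vanishes, and `u' > 0` because `u` goes from `0` to `α`.
Hence `u' = (α ^ 2 - u ^ 2) / c` with `u 0 = 0`, a Lipschitz ODE on `[-α, α]` whose unique solution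
is the tanh kink, and the kink is checked to be a heteroclinic directly.
-/

open Real Filter Set MeasureTheory

noncomputable def Phi (φ : ℝ → ℝ) (t : ℝ) : ℝ := ∫ s in (0:ℝ)..|t|, s * φ s

def IsClassicalSolution (φ V q : ℝ → ℝ) : Prop :=
  Differentiable ℝ q ∧
  ∀ t : ℝ, HasDerivAt
    (fun s => if deriv q s = 0 then 0 else φ |deriv q s| * deriv q s)
    (deriv V (q t)) t

def IsHeteroclinic (φ V : ℝ → ℝ) (α : ℝ) (q : ℝ → ℝ) : Prop :=
  IsClassicalSolution φ V q ∧ Differentiable ℝ (deriv q) ∧ Continuous (deriv q) ∧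
  q 0 = 0 ∧ Tendsto q atTop (nhds α) ∧ Tendsto q atBot (nhds (-α))

open Topology

namespace Real

theorem hasDerivAt_tanh (x : ℝ) : HasDerivAt tanh (1 - tanh x ^ 2) x := by
  have h := (hasDerivAt_sinh x).div (hasDerivAt_cosh x) (cosh_pos x).ne'
  rw [show sinh / cosh = tanh from funext fun y => (tanh_eq_sinh_div_cosh y).symm] at h
  refine h.congr_deriv ?_
  rw [tanh_eq_sinh_div_cosh]
  field_simp

theorem tanh_eq_one_sub_two_div (x : ℝ) : tanh x = 1 - 2 / (exp (2 * x) + 1) := by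
  rw [tanh_eq, exp_neg, show 2 * x = x + x by ring, exp_add]
  field_simp
  ring

theorem tendsto_tanh_atTop : Tendsto tanh atTop (𝓝 1) := by
  have h : Tendsto (fun x => exp (2 * x) + 1) atTop atTop :=
    tendsto_atTop_add_const_right _ 1
      (tendsto_exp_atTop.comp (tendsto_id.const_mul_atTop two_pos))
  simpa [← funext tanh_eq_one_sub_two_div] using
    (h.const_div_atTop 2).const_sub 1

theorem tendsto_tanh_atBot : Tendsto tanh atBot (𝓝 (-1)) := by
  simpa [Function.comp_def] using (tendsto_tanh_atTop.comp tendsto_neg_atBot_atTop).neg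

end Real

section Flux

variable {p q : ℝ}

theorem abs_abs_rpow_sub_two_mul_self (hp : 1 < p) (x : ℝ) :
    |(|x| ^ (p - 2) * x)| = |x| ^ (p - 1) := by
  rcases eq_or_ne x 0 with rfl | hx
  · simp [zero_rpow (sub_pos.2 hp).ne']
  · rw [abs_mul, abs_of_nonneg (rpow_nonneg (abs_nonneg x) _), ← rpow_add_one (abs_ne_zero.2 hx)]
    ring_nf

theorem abs_abs_rpow_sub_two_mul_self_rpow_conj (h : p.HolderConjugate q) (x : ℝ) :
    |(|x| ^ (p - 2) * x)| ^ q = |x| ^ p := by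
  rw [abs_abs_rpow_sub_two_mul_self h.lt, ← rpow_mul (abs_nonneg x), h.sub_one_mul_conj]

/-- The maps `x ↦ |x| ^ (p - 2) * x` of conjugate exponents are inverse to each other. -/
theorem abs_rpow_sub_two_mul_self_conj (h : p.HolderConjugate q) (x : ℝ) :
    |(|x| ^ (p - 2) * x)| ^ (q - 2) * (|x| ^ (p - 2) * x) = x := by
  rcases eq_or_ne x 0 with rfl | hx
  · simp
  have hx' : 0 < |x| := abs_pos.2 hx
  rw [abs_abs_rpow_sub_two_mul_self h.lt, ← rpow_mul hx'.le, ← mul_assoc, ← rpow_add hx',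
    show (p - 1) * (q - 2) + (p - 2) = 0 by linear_combination h.sub_one_mul_conj, rpow_zero,
    one_mul]

end Flux

theorem IsClassicalSolution.hasDerivAt_flux {φ V u : ℝ → ℝ} (hu : IsClassicalSolution φ V u)
    (t : ℝ) : HasDerivAt (fun s => φ |deriv u s| * deriv u s) (deriv V (u t)) t := by
  convert hu.2 t using 2 with s
  split_ifs with h <;> simp [h]

theorem IsClassicalSolution.energy_eq {p : ℝ} (hp : 1 < p) {V u : ℝ → ℝ}
    (hV : Differentiable ℝ V) (hu : IsClassicalSolution (fun t => t ^ (p - 2)) V u) (t s : ℝ) :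
    (p - 1) / p * |deriv u t| ^ p - V (u t) = (p - 1) / p * |deriv u s| ^ p - V (u s) := by
  have hq := HolderConjugate.conjExponent hp
  set q := conjExponent p
  set w := fun s => |deriv u s| ^ (p - 2) * deriv u s
  -- `(|w| ^ q / q)' = |w| ^ (q - 2) * w * w'`, and `|w| ^ (q - 2) * w = u'` inverts the flux.
  have hE : ∀ t, HasDerivAt (fun t => |w t| ^ q / q - V (u t)) 0 t := fun t => by
    have hw := ((hasDerivAt_abs_rpow (w t) hq.symm.lt).comp t (hu.hasDerivAt_flux t)).div_const q
    have hVu := (hV (u t)).hasDerivAt.comp t (hu.1 t).hasDerivAt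
    refine (hw.sub hVu).congr_deriv ?_
    have hwu : |w t| ^ (q - 2) * w t = deriv u t := abs_rpow_sub_two_mul_self_conj hq _
    field_simp [hq.symm.ne_zero]
    linear_combination deriv V (u t) * hwu
  have hcoef : (p - 1) / p = q⁻¹ := by
    rw [← hq.one_sub_inv]
    field_simp [hq.ne_zero]
  have hconst := is_const_of_deriv_eq_zero (fun t => (hE t).differentiableAt)
    (fun t => (hE t).deriv) t s
  simpa only [w, hcoef, abs_abs_rpow_sub_two_mul_self_rpow_conj hq, div_eq_inv_mul] using hconst

noncomputable def doubleWell (p α x : ℝ) : ℝ := |x ^ 2 - α ^ 2| ^ p / p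

theorem hasDerivAt_doubleWell {p : ℝ} (hp : 1 < p) (α x : ℝ) :
    HasDerivAt (doubleWell p α) (2 * x * (x ^ 2 - α ^ 2) * |x ^ 2 - α ^ 2| ^ (p - 2)) x := by
  have h := ((hasDerivAt_abs_rpow _ hp).comp x
    ((hasDerivAt_pow 2 x).sub_const (α ^ 2))).div_const p
  refine h.congr_deriv ?_
  field_simp [(zero_lt_one.trans hp).ne']
  ring

/-- At mean-value points `ξₙ ∈ (n, n + 1)`, `f' ξₙ = f (n + 1) - f n → 0`. -/
theorem eq_of_tendsto_comp_deriv {f G : ℝ → ℝ} {a b : ℝ} (hf : Differentiable ℝ f)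
    (hfa : Tendsto f atTop (𝓝 a)) (hG : ContinuousAt G 0)
    (hGf : Tendsto (fun t => G (deriv f t)) atTop (𝓝 b)) : b = G 0 := by
  have hξ : ∀ n : ℕ, ∃ ξ ∈ Ioo (n : ℝ) (n + 1), deriv f ξ = f (n + 1) - f n := fun n => by
    simpa using exists_deriv_eq_slope f (lt_add_one (n : ℝ)) hf.continuous.continuousOn
      (hf.differentiableOn.mono Ioo_subset_Icc_self)
  choose ξ hξn hξf using hξ
  have hξ_top : Tendsto ξ atTop atTop :=
    tendsto_atTop_mono (fun n => (hξn n).1.le) tendsto_natCast_atTop_atTop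
  have hcast : Tendsto (fun n : ℕ => (n : ℝ)) atTop atTop := tendsto_natCast_atTop_atTop
  have hslope : Tendsto (fun n => deriv f (ξ n)) atTop (𝓝 0) := by
    simp only [hξf]
    simpa using ((hfa.comp (tendsto_atTop_add_const_right _ 1 hcast)).sub (hfa.comp hcast))
  exact tendsto_nhds_unique (hGf.comp hξ_top) ((hG.tendsto.comp hslope))

theorem eq_zero_of_abs_deriv_le_mul_abs_of_le {f g : ℝ → ℝ} {a t : ℝ} (hf : Differentiable ℝ f)
    (hg : Continuous g) (hbound : ∀ s, |deriv f s| ≤ g s * |f s|) (ha : f a = 0) (hat : a ≤ t) :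
    f t = 0 := by
  obtain ⟨K, hK⟩ :=
    (isCompact_Icc (a := a) (b := t)).exists_bound_of_continuousOn hg.continuousOn
  refine eq_zero_of_abs_deriv_le_mul_abs_self_of_eq_zero_right (K := K)
    hf.continuous.continuousOn (fun s _ => (hf s).hasDerivAt.hasDerivWithinAt) ha
    (fun s hs => ?_) t ⟨hat, le_rfl⟩
  calc ‖deriv f s‖ ≤ g s * ‖f s‖ := hbound s
    _ ≤ K * ‖f s‖ := by
      gcongr
      exact (le_abs_self _).trans (hK s (Ico_subset_Icc_self hs))

theorem eq_zero_of_abs_deriv_le_mul_abs {f g : ℝ → ℝ} {a : ℝ} (hf : Differentiable ℝ f)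
    (hg : Continuous g) (hbound : ∀ s, |deriv f s| ≤ g s * |f s|) (ha : f a = 0) (t : ℝ) :
    f t = 0 := by
  rcases le_total a t with hat | hta
  · exact eq_zero_of_abs_deriv_le_mul_abs_of_le hf hg hbound ha hat
  · have := eq_zero_of_abs_deriv_le_mul_abs_of_le (f := fun s => f (-s)) (g := fun s => g (-s))
      (a := -a) (t := -t) (hf.comp differentiable_neg) (hg.comp continuous_neg)
      (fun s => by simpa [deriv_comp_neg] using hbound (-s)) (by simpa using ha) (neg_le_neg hta)
    simpa using this

section Kink

variable {p α c : ℝ} {u : ℝ → ℝ}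

theorem isClassicalSolution_of_hasDerivAt (hp : 1 < p) (hc : 0 < c) (hcp : c ^ p = p - 1)
    (hu : ∀ t, HasDerivAt u ((α ^ 2 - u t ^ 2) / c) t) (hbd : ∀ t, |u t| < α) :
    IsClassicalSolution (fun t => t ^ (p - 2)) (doubleWell p α) u := by
  have hderiv : deriv u = fun t => (α ^ 2 - u t ^ 2) / c := funext fun t => (hu t).deriv
  have hA : ∀ t, 0 < α ^ 2 - u t ^ 2 := fun t =>
    sub_pos.2 (sq_lt_sq' (abs_lt.1 (hbd t)).1 (abs_lt.1 (hbd t)).2)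
  have hpos : ∀ t, 0 < (α ^ 2 - u t ^ 2) / c := fun t => div_pos (hA t) hc
  have hflux : (fun s => if deriv u s = 0 then 0 else |deriv u s| ^ (p - 2) * deriv u s)
      = fun s => ((α ^ 2 - u s ^ 2) / c) ^ (p - 1) := funext fun s => by
    rw [hderiv, if_neg (hpos s).ne', abs_of_pos (hpos s), show p - 1 = p - 2 + 1 by ring,
      rpow_add_one (hpos s).ne']
  refine ⟨fun t => (hu t).differentiableAt, fun t => ?_⟩
  rw [hflux, (hasDerivAt_doubleWell hp α (u t)).deriv]
  have h := ((((hu t).pow 2).const_sub (α ^ 2)).div_const c).rpow_const (p := p - 1)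
    (Or.inl (hpos t).ne')
  simp only [Pi.pow_apply] at h
  refine h.congr_deriv ?_
  have hc2 : c ^ (p - 2) * c ^ 2 = p - 1 := by
    rw [← rpow_natCast, ← rpow_add hc]
    norm_num [hcp]
  rw [abs_of_neg (by linarith [hA t] : u t ^ 2 - α ^ 2 < 0), neg_sub,
    show p - 1 - 1 = p - 2 by ring, div_rpow (hA t).le hc.le]
  field_simp
  linear_combination (2 * u t * (α ^ 2 - u t ^ 2) ^ (p - 2) * (α ^ 2 - u t ^ 2)) * hc2

theorem hasDerivAt_kink (hc : 0 < c) (t : ℝ) :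
    HasDerivAt (fun t => α * tanh (α * t / c)) ((α ^ 2 - (α * tanh (α * t / c)) ^ 2) / c) t := by
  have h := ((hasDerivAt_tanh _).comp t (((hasDerivAt_id' t).const_mul α).div_const c)).const_mul α
  refine h.congr_deriv ?_
  field_simp

theorem abs_kink_lt (hα : 0 < α) (t : ℝ) : |α * tanh (α * t / c)| < α := by
  rw [abs_mul, abs_of_pos hα]
  exact mul_lt_of_lt_one_right hα (abs_tanh_lt_one _)

theorem isHeteroclinic_kink (hp : 1 < p) (hα : 0 < α) (hc : 0 < c) (hcp : c ^ p = p - 1) :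
    IsHeteroclinic (fun t => t ^ (p - 2)) (doubleWell p α) α (fun t => α * tanh (α * t / c)) := by
  have hderiv : deriv (fun t => α * tanh (α * t / c))
      = fun t => (α ^ 2 - (α * tanh (α * t / c)) ^ 2) / c :=
    funext fun t => (hasDerivAt_kink hc t).deriv
  have hdiff : Differentiable ℝ fun t => α * tanh (α * t / c) :=
    fun t => (hasDerivAt_kink hc t).differentiableAt
  refine ⟨isClassicalSolution_of_hasDerivAt hp hc hcp (hasDerivAt_kink hc) (abs_kink_lt hα), ?_,
    ?_, by simp, ?_, ?_⟩
  · rw [hderiv]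
    exact ((hdiff.pow 2).const_sub _).div_const c
  · rw [hderiv]
    exact (((hdiff.pow 2).const_sub _).div_const c).continuous
  · simpa using (tendsto_tanh_atTop.comp
      ((tendsto_id.const_mul_atTop hα).atTop_div_const hc)).const_mul α
  · simpa using (tendsto_tanh_atBot.comp
      ((tendsto_id.const_mul_atBot hα).atBot_div_const hc)).const_mul α

theorem IsHeteroclinic.abs_deriv_eq (hp : 1 < p) (hc : 0 < c) (hcp : c ^ p = p - 1)
    (hu : IsHeteroclinic (fun t => t ^ (p - 2)) (doubleWell p α) α u) (t : ℝ) :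
    |deriv u t| = |u t ^ 2 - α ^ 2| / c := by
  have hp0 : 0 < p := zero_lt_one.trans hp
  have hp1 : 0 < p - 1 := sub_pos.2 hp
  have hV : Differentiable ℝ (doubleWell p α) := fun x =>
    (hasDerivAt_doubleWell hp α x).differentiableAt
  obtain ⟨E, hE_def⟩ : ∃ E, ∀ t, (p - 1) / p * |deriv u t| ^ p - doubleWell p α (u t) = E :=
    ⟨_, fun t => hu.1.energy_eq hp hV t 0⟩
  have hEq : ∀ t, |deriv u t| ^ p = p / (p - 1) * (E + doubleWell p α (u t)) := fun t => by
    rw [← hE_def t]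
    field_simp
    ring
  have htop : Tendsto u atTop (𝓝 α) := hu.2.2.2.2.1
  have hlim : Tendsto (fun t => |deriv u t| ^ p) atTop (𝓝 (p / (p - 1) * E)) := by
    have := ((hV.continuous.tendsto α).comp htop).const_add E |>.const_mul (p / (p - 1))
    simpa [hEq, doubleWell, zero_rpow hp0.ne'] using this
  have hE : p / (p - 1) * E = 0 := by
    simpa [zero_rpow hp0.ne'] using eq_of_tendsto_comp_deriv hu.1.1 htop
      ((continuous_abs.rpow_const fun _ => Or.inr hp0.le).continuousAt) hlim
  have h : |deriv u t| ^ p = (|u t ^ 2 - α ^ 2| / c) ^ p := by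
    rw [hEq t, mul_add, hE, zero_add, doubleWell, div_rpow (abs_nonneg _) hc.le, hcp]
    field_simp
  exact (rpow_left_inj (abs_nonneg _) (by positivity) hp0.ne').1 h

/-- If `u` touched `±α`, the bound `|u'| ≤ |u ± α| / c * |u ∓ α|` and Grönwall would pin `u` to
that value, contradicting `u 0 = 0`. -/
theorem IsHeteroclinic.sq_ne_sq (hp : 1 < p) (hα : 0 < α) (hc : 0 < c) (hcp : c ^ p = p - 1)
    (hu : IsHeteroclinic (fun t => t ^ (p - 2)) (doubleWell p α) α u) (t : ℝ) :
    u t ^ 2 ≠ α ^ 2 := by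
  intro ht
  obtain ⟨β, hβ, hβα⟩ : ∃ β, u t = β ∧ β ^ 2 = α ^ 2 := ⟨_, rfl, ht⟩
  have hbound : ∀ s, |deriv (fun s => u s - β) s| ≤ |u s + β| / c * |u s - β| := fun s => by
    rw [deriv_sub_const, hu.abs_deriv_eq hp hc hcp, ← hβα,
      show u s ^ 2 - β ^ 2 = (u s - β) * (u s + β) by ring, abs_mul]
    field_simp
    rfl
  have h0 := eq_zero_of_abs_deriv_le_mul_abs (hu.1.1.sub_const β)
    ((hu.1.1.continuous.add_const β).abs.div_const c) hbound (sub_eq_zero.2 hβ) 0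
  rw [hu.2.2.2.1, zero_sub, neg_eq_zero] at h0
  rw [h0] at hβα
  nlinarith

theorem IsHeteroclinic.abs_apply_lt (hp : 1 < p) (hα : 0 < α) (hc : 0 < c) (hcp : c ^ p = p - 1)
    (hu : IsHeteroclinic (fun t => t ^ (p - 2)) (doubleWell p α) α u) (t : ℝ) : |u t| < α := by
  by_contra! h
  have hmem : α ∈ uIcc |u 0| |u t| := by
    rw [hu.2.2.2.1, abs_zero]
    exact ⟨by simp [hα.le], by simp [h]⟩
  obtain ⟨s, -, hs⟩ := intermediate_value_uIcc hu.1.1.continuous.abs.continuousOn hmem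
  exact hu.sq_ne_sq hp hα hc hcp s (by rw [← sq_abs]; exact congrArg (· ^ 2) hs)

theorem IsHeteroclinic.deriv_pos (hp : 1 < p) (hα : 0 < α) (hc : 0 < c) (hcp : c ^ p = p - 1)
    (hu : IsHeteroclinic (fun t => t ^ (p - 2)) (doubleWell p α) α u) (t : ℝ) :
    0 < deriv u t := by
  have hne : ∀ s, deriv u s ≠ 0 := fun s h => by
    have := hu.abs_deriv_eq hp hc hcp s
    rw [h, abs_zero, eq_comm, div_eq_zero_iff, abs_eq_zero, sub_eq_zero] at this
    exact hu.sq_ne_sq hp hα hc hcp s (this.resolve_right hc.ne')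
  obtain ⟨T, hT, huT⟩ := ((eventually_gt_atTop 0).and
    (hu.2.2.2.2.1.eventually (eventually_gt_nhds hα))).exists
  obtain ⟨ξ, -, hξ⟩ := exists_deriv_eq_slope u hT hu.1.1.continuous.continuousOn
    hu.1.1.differentiableOn
  have hξpos : 0 < deriv u ξ := by
    rw [hξ, hu.2.2.2.1]
    exact div_pos (by linarith) (by linarith)
  by_contra! ht
  obtain ⟨s, -, hs⟩ := intermediate_value_uIcc hu.2.2.1.continuousOn
    (show (0 : ℝ) ∈ uIcc (deriv u t) (deriv u ξ) from ⟨by simp [ht], by simp [hξpos.le]⟩)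
  exact hne s hs

theorem IsHeteroclinic.hasDerivAt (hp : 1 < p) (hα : 0 < α) (hc : 0 < c) (hcp : c ^ p = p - 1)
    (hu : IsHeteroclinic (fun t => t ^ (p - 2)) (doubleWell p α) α u) (t : ℝ) :
    HasDerivAt u ((α ^ 2 - u t ^ 2) / c) t := by
  have h := hu.abs_deriv_eq hp hc hcp t
  have hbd := abs_lt.1 (hu.abs_apply_lt hp hα hc hcp t)
  have hsq : u t ^ 2 < α ^ 2 := sq_lt_sq' hbd.1 hbd.2
  rw [abs_of_pos (hu.deriv_pos hp hα hc hcp t), abs_of_neg (sub_neg.2 hsq), neg_sub] at h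
  exact h ▸ (hu.1.1 t).hasDerivAt

theorem lipschitzOnWith_sq_sub_sq_div (hc : 0 < c) :
    LipschitzOnWith (2 * α / c).toNNReal (fun x => (α ^ 2 - x ^ 2) / c) (Icc (-α) α) := by
  refine LipschitzOnWith.of_dist_le_mul fun x hx y hy => ?_
  have hxy : |x + y| ≤ 2 * α := by
    rw [abs_le]
    constructor <;> linarith [hx.1, hx.2, hy.1, hy.2]
  rw [Real.dist_eq, Real.dist_eq,
    Real.coe_toNNReal _ (div_nonneg (by linarith [abs_nonneg (x + y)]) hc.le),
    show (α ^ 2 - x ^ 2) / c - (α ^ 2 - y ^ 2) / c = -((x + y) * (x - y)) / c by ring, abs_div,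
    abs_neg, abs_mul, abs_of_pos hc, div_mul_eq_mul_div]
  gcongr

theorem eq_kink_of_hasDerivAt (hα : 0 < α) (hc : 0 < c)
    (hu : ∀ t, HasDerivAt u ((α ^ 2 - u t ^ 2) / c) t) (hbd : ∀ t, |u t| < α) (h0 : u 0 = 0) :
    u = fun t => α * tanh (α * t / c) :=
  ODE_solution_unique_univ (v := fun _ x => (α ^ 2 - x ^ 2) / c) (s := fun _ => Icc (-α) α)
    (t₀ := 0) (fun _ => lipschitzOnWith_sq_sub_sq_div hc)
    (fun t => ⟨hu t, abs_le.1 (hbd t).le⟩)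
    (fun t => ⟨hasDerivAt_kink hc t, abs_le.1 (abs_kink_lt hα t).le⟩) (by simp [h0])

end Kink

theorem statement7 (p α : ℝ) (hp : 1 < p) (hα : 0 < α) :
    IsHeteroclinic (fun t : ℝ => t ^ (p - 2)) (fun t : ℝ => |t ^ 2 - α ^ 2| ^ p / p) α
      (fun t : ℝ => α * Real.tanh (α * t / (p - 1) ^ (1 / p))) ∧
    ∀ u : ℝ → ℝ,
      IsHeteroclinic (fun t : ℝ => t ^ (p - 2)) (fun t : ℝ => |t ^ 2 - α ^ 2| ^ p / p) α u →
      u = fun t : ℝ => α * Real.tanh (α * t / (p - 1) ^ (1 / p)) := by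
  have hc : 0 < (p - 1) ^ (1 / p) := rpow_pos_of_pos (sub_pos.2 hp) _
  have hcp : ((p - 1) ^ (1 / p)) ^ p = p - 1 := by
    rw [one_div, rpow_inv_rpow (sub_pos.2 hp).le (zero_lt_one.trans hp).ne']
  refine ⟨isHeteroclinic_kink hp hα hc hcp, fun u hu => ?_⟩
  exact eq_kink_of_hasDerivAt hα hc (hu.hasDerivAt hp hα hc hcp) (hu.abs_apply_lt hp hα hc hcp)
    hu.2.2.2.1
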